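/- Proposition 1 (conflict-free region can be maintained forward invariant): let A be nonempty, let I be a finite index set of opponent agents with initial relative states s0_j ∈ ℝ^n for j ∈ I, and let V_worst : ℝ^n → ℝ satisfy (i) V_worst(s) ≤ dist(s) for all s ∈ ℝ^n, and (ii) robust controlled invariance of its superlevel set: whenever V_worst(s0) ≥ r_safety, for every ego control a : ℝ → A there exist an opponent control b : ℝ → A and a function s : ℝ → ℝ^n with s(0) = s0, differentiable at every t ≥ 0 with derivative f(s(t), a(t), b(t)), such that V_worst(s(t)) ≥ r_safety for all t ≥ 0. Assume that (H1) for every j ∈ I the state s0_j lies in the maximal safe set S, and (H2) there do not exist two distinct indices j1, j2 ∈ I with V_worst(s0_{j1}) < r_safety and V_worst(s0_{j2}) < r_safety. Then there exist a single ego control a : ℝ → A and, for each j ∈ I, an opponent control b_j : ℝ → A and a function s_j : ℝ → ℝ^n with s_j(0) = s0_j, differentiable at every t ≥ 0 with derivative f(s_j(t), a(t), b_j(t)), such that dist(s_j(t)) ≥ r_safety for all j ∈ I and all t ≥ 0; i.e. the ego agent can avoid a near-collision with every opponent simultaneously. -/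
import Mathlib


open Set

/-- An admissible trajectory for the pair of agents: actions `a b : ℝ → A` and a
state trajectory `s : ℝ → ℝ^n` with `s 0 = s0`, differentiable at every `t ≥ 0`
with derivative given by the relative dynamics `f`. -/
def IsAdmissible {n m : ℕ} (A : Set (Fin m → ℝ))
    (f : (Fin n → ℝ) → A → A → (Fin n → ℝ)) (s0 : Fin n → ℝ)
    (a b : ℝ → A) (s : ℝ → Fin n → ℝ) : Prop :=
  s 0 = s0 ∧ ∀ t : ℝ, 0 ≤ t → HasDerivAt s (f (s t) (a t) (b t)) t

/-- The minimal backward reachable tube of the near-collision set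
`L = {s | dst s < r_safety}`: every admissible trajectory eventually enters `L`. -/
def BRT {n m : ℕ} (A : Set (Fin m → ℝ))
    (f : (Fin n → ℝ) → A → A → (Fin n → ℝ))
    (dst : (Fin n → ℝ) → ℝ) (r_safety : ℝ) : Set (Fin n → ℝ) :=
  {s0 | ∀ a b s, IsAdmissible A f s0 a b s → ∃ t : ℝ, 0 ≤ t ∧ dst (s t) < r_safety}

/-- The maximal safe set: some admissible trajectory keeps `dst (s t) ≥ r_safety`
for all `t ≥ 0`. -/
def SafeSet {n m : ℕ} (A : Set (Fin m → ℝ))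
    (f : (Fin n → ℝ) → A → A → (Fin n → ℝ))
    (dst : (Fin n → ℝ) → ℝ) (r_safety : ℝ) : Set (Fin n → ℝ) :=
  {s0 | ∃ a b s, IsAdmissible A f s0 a b s ∧ ∀ t : ℝ, 0 ≤ t → r_safety ≤ dst (s t)}

/-- The reachability value function
`V(s0) = sup { inf_{t ≥ 0} dst (s t) : (a, b, s) admissible from s0 }`. -/
noncomputable def Vval {n m : ℕ} (A : Set (Fin m → ℝ))
    (f : (Fin n → ℝ) → A → A → (Fin n → ℝ))
    (dst : (Fin n → ℝ) → ℝ) (s0 : Fin n → ℝ) : ℝ :=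
  sSup {v : ℝ | ∃ a b s, IsAdmissible A f s0 a b s ∧
    v = sInf {d : ℝ | ∃ t : ℝ, 0 ≤ t ∧ d = dst (s t)}}

/-- Proposition 1: the conflict-free region can be maintained
forward invariant. If every opponent's initial relative state is in the maximal
safe set, and at most one opponent has `V_worst` below `r_safety`, then there is
a single ego control `a` such that for each opponent `j` there are an opponent
control `b j` and a trajectory `s j` from `s0 j`, following the relative
dynamics, with `dst (s j t) ≥ r_safety` for all `t ≥ 0`. -/
theorem conflict_free_region_forward_invariant {n m : ℕ}
    (A : Set (Fin m → ℝ)) (hA : A.Nonempty)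
    (f : (Fin n → ℝ) → A → A → (Fin n → ℝ))
    (dst : (Fin n → ℝ) → ℝ) (hdst : Continuous dst)
    (r_safety : ℝ) (hr : 0 < r_safety)
    (I : Type*) [Finite I] (s0 : I → Fin n → ℝ)
    (Vworst : (Fin n → ℝ) → ℝ)
    -- (i) V_worst is bounded above by the instantaneous distance
    (hVle : ∀ z : Fin n → ℝ, Vworst z ≤ dst z)
    -- (ii) robust controlled invariance of the superlevel set of V_worst:
    -- the opponent can keep `V_worst ≥ r_safety` regardless of the ego control
    (hVinv : ∀ z0 : Fin n → ℝ, r_safety ≤ Vworst z0 →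
      ∀ a : ℝ → A, ∃ (b : ℝ → A) (s : ℝ → Fin n → ℝ), s 0 = z0 ∧
        (∀ t : ℝ, 0 ≤ t → HasDerivAt s (f (s t) (a t) (b t)) t) ∧
        (∀ t : ℝ, 0 ≤ t → r_safety ≤ Vworst (s t)))
    -- (H1) every opponent's relative state lies in the maximal safe set
    (H1 : ∀ j : I, s0 j ∈ SafeSet A f dst r_safety)
    -- (H2) at most one opponent has worst-case value below the safety radius
    (H2 : ¬ ∃ j1 j2 : I, j1 ≠ j2 ∧
      Vworst (s0 j1) < r_safety ∧ Vworst (s0 j2) < r_safety) :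
    ∃ a : ℝ → A, ∀ j : I, ∃ (b : ℝ → A) (s : ℝ → Fin n → ℝ), s 0 = s0 j ∧
      (∀ t : ℝ, 0 ≤ t → HasDerivAt s (f (s t) (a t) (b t)) t) ∧
      (∀ t : ℝ, 0 ≤ t → r_safety ≤ dst (s t)) := by
  classical
  by_cases hex : ∃ j0 : I, Vworst (s0 j0) < r_safety
  · obtain ⟨j0, hj0⟩ := hex
    obtain ⟨a, b0, sfun0, ⟨hs0, hder⟩, hsafe⟩ := H1 j0
    refine ⟨a, fun j => ?_⟩
    by_cases hjj : j = j0
    · subst hjj; exact ⟨b0, sfun0, hs0, hder, hsafe⟩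
    · have hVj : r_safety ≤ Vworst (s0 j) := by
        by_contra h
        exact H2 ⟨j, j0, hjj, lt_of_not_ge h, hj0⟩
      obtain ⟨b, s, h1, h2, h3⟩ := hVinv (s0 j) hVj a
      exact ⟨b, s, h1, h2, fun t ht => le_trans (h3 t ht) (hVle (s t))⟩
  · push_neg at hex
    obtain ⟨a0, ha0⟩ := hA
    refine ⟨fun _ => ⟨a0, ha0⟩, fun j => ?_⟩
    obtain ⟨b, s, h1, h2, h3⟩ := hVinv (s0 j) (hex j) (fun _ => ⟨a0, ha0⟩)
    exact ⟨b, s, h1, h2, fun t ht => le_trans (h3 t ht) (hVle (s t))⟩
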